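/- arXiv:2508.05566 — 3 statements merged into one kernel-verified Lean document; each statement's English description precedes it below -/
import Mathlib

section
/- Let (E, P, ϑ) be a complete bipolar metric space and F : E ∪ P → E ∪ P a covariant map. Suppose there exist π ∈ (0,1), σ ≥ 1, and positive constants q₁,…,q_σ such that Σ_{υ=1}^{σ} q_υ·ϑ(Fe, Ff)^υ ≤ π·Σ_{υ=1}^{σ} q_υ·ϑ(e, f)^υ for all e ∈ E, f ∈ P. Then F has a unique fixed point. -/
/-!
Write `p t = ∑_{υ=1}^{σ} q_υ t^υ` and `k = π^{1/σ}`. Since `k^σ ≤ k^υ` for `υ ≤ σ`, we have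
`π p t ≤ p (k t)`, and `p` is strictly increasing on `[0, ∞)`; so the polynomial contraction
`p (ϑ(Fe, Ff)) ≤ π p (ϑ(e, f))` forces `ϑ(Fe, Ff) ≤ k ϑ(e, f)`. Thus `F` is a Banach
contraction, and the bipolar Banach principle applies: the Picard orbits of any `e₀ ∈ E`,
`f₀ ∈ P` form a Cauchy bisequence, its limit is fixed by `F`, and two fixed points are at
distance `0`.
-/

open Filter Topology MeasureTheory

/-- A bipolar metric space on a carrier type `α`: two poles `E`, `P` and a
distance `d` defined (meaningfully) on `E × P`. -/
structure BipolarMS (α : Type*) where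
  E : Set α
  P : Set α
  hE : E.Nonempty
  hP : P.Nonempty
  d : α → α → ℝ
  nonneg : ∀ e ∈ E, ∀ f ∈ P, 0 ≤ d e f
  eq_iff : ∀ e ∈ E ∩ P, ∀ f ∈ E ∩ P, (d e f = 0 ↔ e = f)
  symm : ∀ e ∈ E ∩ P, ∀ f ∈ E ∩ P, d e f = d f e
  tri : ∀ e ∈ E, ∀ r ∈ E, ∀ z ∈ P, ∀ f ∈ P, d e f ≤ d e z + d r z + d r f

namespace BipolarMS

variable {α : Type*}

/-- Completeness: every Cauchy bisequence biconverges to a common point of `E ∩ P`. -/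
def IsComplete (B : BipolarMS α) : Prop :=
  ∀ g h : ℕ → α, (∀ n, g n ∈ B.E) → (∀ n, h n ∈ B.P) →
    Tendsto (fun p : ℕ × ℕ => B.d (g p.1) (h p.2)) atTop (𝓝 0) →
    ∃ x ∈ B.E ∩ B.P,
      Tendsto (fun n => B.d (g n) x) atTop (𝓝 0) ∧
      Tendsto (fun n => B.d x (h n)) atTop (𝓝 0)

/-- A covariant map preserves the poles. -/
def Covariant (B : BipolarMS α) (F : α → α) : Prop :=
  (∀ e ∈ B.E, F e ∈ B.E) ∧ (∀ f ∈ B.P, F f ∈ B.P)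

/-- A contravariant map swaps the poles. -/
def Contravariant (B : BipolarMS α) (F : α → α) : Prop :=
  (∀ e ∈ B.E, F e ∈ B.P) ∧ (∀ f ∈ B.P, F f ∈ B.E)

/-- Sequential continuity of a covariant map. -/
def SeqContinuous (B : BipolarMS α) (F : α → α) : Prop :=
  ∀ g h : ℕ → α, (∀ n, g n ∈ B.E) → (∀ n, h n ∈ B.P) →
    Tendsto (fun n => B.d (g n) (h n)) atTop (𝓝 0) →
    Tendsto (fun n => B.d (F (g n)) (F (h n))) atTop (𝓝 0)

/-- Sequential continuity of a contravariant map. -/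
def ContraSeqContinuous (B : BipolarMS α) (F : α → α) : Prop :=
  ∀ g h : ℕ → α, (∀ n, g n ∈ B.E) → (∀ n, h n ∈ B.P) →
    Tendsto (fun n => B.d (g n) (h n)) atTop (𝓝 0) →
    Tendsto (fun n => B.d (F (h n)) (F (g n))) atTop (𝓝 0)

/-- Picard-continuity. -/
def PicardContinuous (B : BipolarMS α) (F : α → α) : Prop :=
  ∀ g ∈ B.E, ∀ h ∈ B.P,
    Tendsto (fun κ => B.d (F^[κ] g) h) atTop (𝓝 0) →
    Tendsto (fun κ => B.d (F (F^[κ] g)) (F h)) atTop (𝓝 0)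

/-- Polynomial contraction condition for a covariant map. -/
def IsPolyContraction (B : BipolarMS α) (F : α → α) (π : ℝ) (σ : ℕ)
    (q : ℕ → α → α → ℝ) : Prop :=
  ∀ e ∈ B.E, ∀ f ∈ B.P,
    ∑ υ ∈ Finset.range (σ + 1), q υ (F e) (F f) * B.d (F e) (F f) ^ υ ≤
      π * ∑ υ ∈ Finset.range (σ + 1), q υ e f * B.d e f ^ υ

/-- Polynomial contraction condition for a contravariant map
(`F f ∈ E`, `F e ∈ P`). -/
def IsContraPolyContraction (B : BipolarMS α) (F : α → α) (π : ℝ) (σ : ℕ)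
    (q : ℕ → α → α → ℝ) : Prop :=
  ∀ e ∈ B.E, ∀ f ∈ B.P,
    ∑ υ ∈ Finset.range (σ + 1), q υ (F f) (F e) * B.d (F f) (F e) ^ υ ≤
      π * ∑ υ ∈ Finset.range (σ + 1), q υ e f * B.d e f ^ υ

/-- Almost polynomial contraction condition for a covariant map. -/
def IsAlmostPolyContraction (B : BipolarMS α) (F : α → α) (π : ℝ) (σ : ℕ)
    (q : ℕ → α → α → ℝ) (H : ℕ → ℝ) : Prop :=
  ∀ e ∈ B.E, ∀ f ∈ B.P,
    ∑ υ ∈ Finset.range (σ + 1), q υ (F e) (F f) * B.d (F e) (F f) ^ υ ≤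
      π * ∑ υ ∈ Finset.range (σ + 1),
        q υ e f * (B.d e f ^ υ + H υ * B.d (F e) f ^ υ)

end BipolarMS

theorem le_mul_of_sum_pow_le_pow_mul_sum {σ : ℕ} (hσ : 1 ≤ σ) {q : ℕ → ℝ}
    (hq : ∀ υ ∈ Finset.Icc 1 σ, 0 < q υ) {k s t : ℝ} (hk0 : 0 ≤ k) (hk1 : k ≤ 1)
    (ht : 0 ≤ t)
    (h : ∑ υ ∈ Finset.Icc 1 σ, q υ * s ^ υ ≤
      k ^ σ * ∑ υ ∈ Finset.Icc 1 σ, q υ * t ^ υ) :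
    s ≤ k * t := by
  by_contra! hlt
  have hkt : 0 ≤ k * t := mul_nonneg hk0 ht
  have h_scale : k ^ σ * ∑ υ ∈ Finset.Icc 1 σ, q υ * t ^ υ ≤
      ∑ υ ∈ Finset.Icc 1 σ, q υ * (k * t) ^ υ := by
    rw [Finset.mul_sum]
    refine Finset.sum_le_sum fun υ hυ => ?_
    have hkυ : k ^ σ ≤ k ^ υ := pow_le_pow_of_le_one hk0 hk1 (Finset.mem_Icc.1 hυ).2
    rw [mul_pow, mul_left_comm]
    exact mul_le_mul_of_nonneg_left (mul_le_mul_of_nonneg_right hkυ (pow_nonneg ht υ))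
      (hq υ hυ).le
  have h_mono :
      ∑ υ ∈ Finset.Icc 1 σ, q υ * (k * t) ^ υ < ∑ υ ∈ Finset.Icc 1 σ, q υ * s ^ υ :=
    Finset.sum_lt_sum
      (fun υ hυ => mul_le_mul_of_nonneg_left (pow_le_pow_left₀ hkt hlt.le υ) (hq υ hυ).le)
      ⟨1, Finset.mem_Icc.2 ⟨le_rfl, hσ⟩, by
        simpa using mul_lt_mul_of_pos_left hlt (hq 1 (Finset.mem_Icc.2 ⟨le_rfl, hσ⟩))⟩
  linarith

namespace BipolarMS

variable {α : Type*} (B : BipolarMS α)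

theorem d_self {x : α} (hx : x ∈ B.E ∩ B.P) : B.d x x = 0 :=
  (B.eq_iff x hx x hx).2 rfl

theorem eq_of_tendsto_d {g : ℕ → α} (hg : ∀ n, g n ∈ B.E) {x y : α}
    (hx : x ∈ B.E ∩ B.P) (hy : y ∈ B.E ∩ B.P)
    (hgx : Tendsto (fun n => B.d (g n) x) atTop (𝓝 0))
    (hgy : Tendsto (fun n => B.d (g n) y) atTop (𝓝 0)) : x = y := by
  have hle : ∀ n, B.d x y ≤ B.d (g n) x + B.d (g n) y := fun n => by
    have := B.tri x hx.1 (g n) (hg n) x hx.2 y hy.2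
    rwa [B.d_self hx, zero_add] at this
  have hxy : B.d x y ≤ 0 := by
    simpa using le_of_tendsto_of_tendsto' tendsto_const_nhds (hgx.add hgy) hle
  exact (B.eq_iff x hx y hy).1 (le_antisymm hxy (B.nonneg x hx.1 y hy.2))

section Bisequence

variable {B} {g h : ℕ → α} (hg : ∀ n, g n ∈ B.E) (hh : ∀ n, h n ∈ B.P) {A k : ℝ}
  (hk0 : 0 ≤ k) (hk1 : k < 1)
  (hdiag : ∀ n, B.d (g n) (h n) ≤ A * k ^ n)
  (hnext : ∀ n, B.d (g (n + 1)) (h n) ≤ A * k ^ n)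
include hg hh hk0 hk1 hdiag hnext

theorem d_add_le_of_geometric (n j : ℕ) :
    B.d (g n) (h (n + j)) ≤ 2 * A / (1 - k) * k ^ n := by
  have hA : 0 ≤ A := by simpa using (B.nonneg _ (hg 0) _ (hh 0)).trans (hdiag 0)
  have hC : 2 * A / (1 - k) * (1 - k) = 2 * A := div_mul_cancel₀ _ (by linarith)
  induction j generalizing n with
  | zero =>
    have hAC : A ≤ 2 * A / (1 - k) := by nlinarith
    simpa using (hdiag n).trans (mul_le_mul_of_nonneg_right hAC (pow_nonneg hk0 n))
  | succ j ih =>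
    have htri := B.tri _ (hg n) _ (hg (n + 1)) _ (hh n) _ (hh (n + (j + 1)))
    have hrest := ih (n + 1)
    rw [show n + 1 + j = n + (j + 1) by ring, pow_succ] at hrest
    nlinarith [hdiag n, hnext n, pow_nonneg hk0 n]

theorem exists_d_le_geometric_min : ∃ C, ∀ n m, B.d (g n) (h m) ≤ C * k ^ min n m := by
  set C₁ := 2 * A / (1 - k)
  refine ⟨C₁ + 2 * A, fun n m => ?_⟩
  have hA : 0 ≤ A := by simpa using (B.nonneg _ (hg 0) _ (hh 0)).trans (hdiag 0)
  rcases le_or_gt n m with hnm | hmn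
  · have hbd := d_add_le_of_geometric hg hh hk0 hk1 hdiag hnext n (m - n)
    rw [Nat.add_sub_cancel' hnm] at hbd
    rw [min_eq_left hnm]
    nlinarith [pow_nonneg hk0 n]
  · -- triangle through `g m` and `h n`: `d (g m) (h n)` falls under the first case
    have htri := B.tri _ (hg n) _ (hg m) _ (hh n) _ (hh m)
    have hbd := d_add_le_of_geometric hg hh hk0 hk1 hdiag hnext m (n - m)
    rw [Nat.add_sub_cancel' hmn.le] at hbd
    have hkn : k ^ n ≤ k ^ m := pow_le_pow_of_le_one hk0 hk1.le hmn.le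
    rw [min_eq_right hmn.le]
    nlinarith [hdiag n, hdiag m, pow_nonneg hk0 m]

theorem tendsto_d_of_geometric :
    Tendsto (fun p : ℕ × ℕ => B.d (g p.1) (h p.2)) atTop (𝓝 0) := by
  obtain ⟨C, hC⟩ := exists_d_le_geometric_min hg hh hk0 hk1 hdiag hnext
  have hmin : Tendsto (fun p : ℕ × ℕ => min p.1 p.2) atTop atTop :=
    tendsto_atTop_atTop.2 fun b => ⟨(b, b), fun _ hp => le_min hp.1 hp.2⟩
  have hbound : Tendsto (fun p : ℕ × ℕ => C * k ^ min p.1 p.2) atTop (𝓝 0) := by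
    simpa using ((tendsto_pow_atTop_nhds_zero_of_lt_one hk0 hk1).comp hmin).const_mul C
  exact squeeze_zero (fun p => B.nonneg _ (hg _) _ (hh _)) (fun p => hC _ _) hbound

end Bisequence

theorem d_iterate_le {F : α → α} (hcov : B.Covariant F) {k : ℝ} (hk0 : 0 ≤ k)
    (hF : ∀ e ∈ B.E, ∀ f ∈ B.P, B.d (F e) (F f) ≤ k * B.d e f)
    {e f : α} (he : e ∈ B.E) (hf : f ∈ B.P) (n : ℕ) :
    B.d (F^[n] e) (F^[n] f) ≤ k ^ n * B.d e f := by
  induction n with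
  | zero => simp
  | succ n ih =>
    rw [Function.iterate_succ_apply', Function.iterate_succ_apply', pow_succ']
    calc B.d (F (F^[n] e)) (F (F^[n] f)) ≤ k * B.d (F^[n] e) (F^[n] f) :=
          hF _ (Set.MapsTo.iterate hcov.1 n he) _ (Set.MapsTo.iterate hcov.2 n hf)
      _ ≤ k * (k ^ n * B.d e f) := mul_le_mul_of_nonneg_left ih hk0
      _ = k * k ^ n * B.d e f := by ring

theorem existsUnique_fixedPoint_of_contraction {F : α → α} (hcov : B.Covariant F)
    (hcomp : B.IsComplete) {k : ℝ} (hk0 : 0 ≤ k) (hk1 : k < 1)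
    (hF : ∀ e ∈ B.E, ∀ f ∈ B.P, B.d (F e) (F f) ≤ k * B.d e f) :
    ∃! x, x ∈ B.E ∩ B.P ∧ F x = x := by
  obtain ⟨e₀, he₀⟩ := B.hE
  obtain ⟨f₀, hf₀⟩ := B.hP
  have hg : ∀ n, F^[n] e₀ ∈ B.E := fun n => Set.MapsTo.iterate hcov.1 n he₀
  have hh : ∀ n, F^[n] f₀ ∈ B.P := fun n => Set.MapsTo.iterate hcov.2 n hf₀
  set A := max (B.d e₀ f₀) (B.d (F e₀) f₀)
  have hdiag : ∀ n, B.d (F^[n] e₀) (F^[n] f₀) ≤ A * k ^ n := fun n =>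
    (B.d_iterate_le hcov hk0 hF he₀ hf₀ n).trans
      (by rw [mul_comm]; exact mul_le_mul_of_nonneg_right (le_max_left _ _) (pow_nonneg hk0 n))
  have hnext : ∀ n, B.d (F^[n + 1] e₀) (F^[n] f₀) ≤ A * k ^ n := fun n => by
    rw [Function.iterate_succ_apply]
    exact (B.d_iterate_le hcov hk0 hF (hcov.1 e₀ he₀) hf₀ n).trans
      (by rw [mul_comm]; exact mul_le_mul_of_nonneg_right (le_max_right _ _) (pow_nonneg hk0 n))
  obtain ⟨x, hx, hgx, -⟩ :=
    hcomp _ _ hg hh (tendsto_d_of_geometric hg hh hk0 hk1 hdiag hnext)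
  have hFx : F x ∈ B.E ∩ B.P := ⟨hcov.1 x hx.1, hcov.2 x hx.2⟩
  have hgFx : Tendsto (fun n => B.d (F^[n + 1] e₀) (F x)) atTop (𝓝 0) := by
    refine squeeze_zero (fun n => B.nonneg _ (hg _) _ hFx.2) (fun n => ?_)
      (by simpa using hgx.const_mul k)
    rw [Function.iterate_succ_apply']
    exact hF _ (hg n) _ hx.2
  have hfix : F x = x :=
    B.eq_of_tendsto_d (fun n => hg (n + 1)) hFx hx hgFx (hgx.comp (tendsto_add_atTop_nat 1))
  refine ⟨x, ⟨hx, hfix⟩, fun y ⟨hy, hyfix⟩ => ?_⟩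
  have hyx : B.d y x ≤ k * B.d y x := by simpa [hyfix, hfix] using hF y hy.1 x hx.2
  have hnn := B.nonneg y hy.1 x hx.2
  exact (B.eq_iff y hy x hx).1 (by nlinarith)

end BipolarMS

/-- constant-coefficient polynomial contraction fixed point theorem. -/
theorem constCoeff_polyContraction_fixedPoint {α : Type*} (B : BipolarMS α)
    (F : α → α) (hcov : B.Covariant F) (hcomp : B.IsComplete)
    (π : ℝ) (hπ : π ∈ Set.Ioo (0:ℝ) 1) (σ : ℕ) (hσ : 1 ≤ σ)
    (q : ℕ → ℝ) (hq : ∀ υ ∈ Finset.Icc 1 σ, 0 < q υ)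
    (hPC : ∀ e ∈ B.E, ∀ f ∈ B.P,
      ∑ υ ∈ Finset.Icc 1 σ, q υ * B.d (F e) (F f) ^ υ ≤
        π * ∑ υ ∈ Finset.Icc 1 σ, q υ * B.d e f ^ υ) :
    ∃! x, x ∈ B.E ∩ B.P ∧ F x = x := by
  obtain ⟨hπ0, hπ1⟩ := hπ
  have hσ0 : σ ≠ 0 := by omega
  set k := π ^ ((σ : ℝ)⁻¹)
  have hk0 : 0 ≤ k := Real.rpow_nonneg hπ0.le _
  have hk1 : k < 1 := Real.rpow_lt_one hπ0.le hπ1 (by positivity)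
  have hkσ : k ^ σ = π := Real.rpow_inv_natCast_pow hπ0.le hσ0
  exact B.existsUnique_fixedPoint_of_contraction hcov hcomp hk0 hk1 fun e he f hf =>
    le_mul_of_sum_pow_le_pow_mul_sum hσ hq hk0 hk1.le (B.nonneg e he f hf) (hkσ ▸ hPC e he f hf)
end

section
/- Let (E, P, ϑ) be a complete bipolar metric space and F : E ∪ P → E ∪ P a covariant polynomial contraction (with coefficient maps q₀,…,q_σ and π ∈ (0,1)). If F is Picard-continuous and there exist ϱ ∈ {1,…,σ} and Q_ϱ > 0 with q_ϱ(e, f) ≥ Q_ϱ for all e ∈ E, f ∈ P, then F admits a unique fixed point. -/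
open Filter Topology MeasureTheory

/-! The gauge `S(e, f) = ∑ q_υ(e, f) ϑ(e, f)^υ` (`polyGauge`) contracts by `π` along the
orbits of `F` and dominates `Q ϑ(e, f)^ϱ`; hence `ϑ(Fⁿe, Fⁿf) ≤ (S(e, f) / Q)^{1/ϱ} (π^{1/ϱ})ⁿ`
is summable in `n`. Applied to `(e, f)` and `(F e, f)` this makes the Picard bisequence Cauchy;
its limit is fixed by Picard-continuity, and it is the only fixed point because the constant
sequence `ϑ(x, y)` between two fixed points is summable. -/

open Filter Topology Finset

theorem summable_of_pow_le_mul_geometric {x : ℕ → ℝ} {ϱ : ℕ} {C π : ℝ} (hϱ : ϱ ≠ 0)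
    (hπ0 : 0 ≤ π) (hπ1 : π < 1) (hx : ∀ n, 0 ≤ x n) (h : ∀ n, x n ^ ϱ ≤ C * π ^ n) :
    Summable x := by
  have hC : 0 ≤ C := by simpa using (pow_nonneg (hx 0) ϱ).trans (h 0)
  set r := π ^ (ϱ⁻¹ : ℝ)
  have hr0 : 0 ≤ r := Real.rpow_nonneg hπ0 _
  have hr1 : r < 1 := Real.rpow_lt_one hπ0 hπ1 (by positivity)
  refine .of_nonneg_of_le hx (fun n => ?_)
    ((summable_geometric_of_lt_one hr0 hr1).mul_left (C ^ (ϱ⁻¹ : ℝ)))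
  refine le_of_pow_le_pow_left₀ hϱ (by positivity) ?_
  rw [mul_pow, Real.rpow_inv_natCast_pow hC hϱ, ← pow_mul, mul_comm n, pow_mul,
    Real.rpow_inv_natCast_pow hπ0 hϱ]
  exact h n

theorem sum_Ico_le_tsum_nat_add {f : ℕ → ℝ} (hf : Summable f) (h0 : ∀ n, 0 ≤ f n) (m n : ℕ) :
    ∑ k ∈ Ico m n, f k ≤ ∑' k, f (k + m) := by
  rw [sum_Ico_eq_sum_range]
  simp_rw [add_comm m]
  exact ((summable_nat_add_iff m).2 hf).sum_le_tsum _ fun k _ => h0 _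

namespace BipolarMS

variable {α : Type*} {B : BipolarMS α}

section Bisequences

variable {g h : ℕ → α} (hg : ∀ n, g n ∈ B.E) (hh : ∀ n, h n ∈ B.P)
include hg hh

theorem dist_le_sum_Ico_of_le {m n : ℕ} (hmn : m ≤ n) :
    B.d (g m) (h n) ≤
      ∑ k ∈ Ico m n, (B.d (g k) (h k) + B.d (g (k + 1)) (h k)) + B.d (g n) (h n) := by
  induction n, hmn using Nat.le_induction with
  | base => simp
  | succ n hmn ih =>
    have := B.tri _ (hg m) _ (hg (n + 1)) _ (hh n) _ (hh (n + 1))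
    rw [sum_Ico_succ_top hmn]
    linarith

theorem dist_le_sum_Ico_of_ge {m n : ℕ} (hnm : n ≤ m) :
    B.d (g m) (h n) ≤
      ∑ k ∈ Ico n m, (B.d (g k) (h k) + B.d (g (k + 1)) (h k)) + B.d (g n) (h n) := by
  induction m, hnm using Nat.le_induction with
  | base => simp
  | succ m hnm ih =>
    have := B.tri _ (hg (m + 1)) _ (hg m) _ (hh m) _ (hh n)
    rw [sum_Ico_succ_top hnm]
    linarith

theorem tendsto_dist_of_summable (hd : Summable fun n => B.d (g n) (h n))
    (hd' : Summable fun n => B.d (g (n + 1)) (h n)) :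
    Tendsto (fun p : ℕ × ℕ => B.d (g p.1) (h p.2)) atTop (𝓝 0) := by
  set a := fun k => B.d (g k) (h k) + B.d (g (k + 1)) (h k)
  have ha : Summable a := hd.add hd'
  have ha0 : ∀ k, 0 ≤ a k := fun k =>
    add_nonneg (B.nonneg _ (hg k) _ (hh k)) (B.nonneg _ (hg (k + 1)) _ (hh k))
  set tail := fun i => ∑' k, a (k + i)
  have hdiag : ∀ i n, i ≤ n → B.d (g n) (h n) ≤ tail i := fun i n hin =>
    calc B.d (g n) (h n) ≤ a n := le_add_of_nonneg_right (B.nonneg _ (hg (n + 1)) _ (hh n))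
      _ ≤ ∑ k ∈ Ico i (n + 1), a k :=
          single_le_sum (fun k _ => ha0 k) (by simp only [mem_Ico]; omega)
      _ ≤ tail i := sum_Ico_le_tsum_nat_add ha ha0 _ _
  have hbound : ∀ m n, B.d (g m) (h n) ≤ 2 * tail (min m n) := by
    intro m n
    rcases le_total m n with hmn | hnm
    · have := dist_le_sum_Ico_of_le hg hh hmn
      have := sum_Ico_le_tsum_nat_add ha ha0 m n
      have := hdiag m n hmn
      rw [min_eq_left hmn]
      linarith
    · have := dist_le_sum_Ico_of_ge hg hh hnm
      have := sum_Ico_le_tsum_nat_add ha ha0 n m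
      have := hdiag n n le_rfl
      rw [min_eq_right hnm]
      linarith
  have hmin : Tendsto (fun p : ℕ × ℕ => min p.1 p.2) atTop atTop :=
    tendsto_atTop_atTop.2 fun b => ⟨(b, b), fun p hp => le_min hp.1 hp.2⟩
  refine squeeze_zero (fun p => B.nonneg _ (hg p.1) _ (hh p.2)) (fun p => hbound p.1 p.2) ?_
  simpa using ((tendsto_sum_nat_add a).comp hmin).const_mul 2

end Bisequences

theorem dist_eq_zero_of_tendsto {g h : ℕ → α} (hg : ∀ n, g n ∈ B.E) (hh : ∀ n, h n ∈ B.P)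
    {x y : α} (hx : x ∈ B.E) (hy : y ∈ B.P) (hxh : Tendsto (fun n => B.d x (h n)) atTop (𝓝 0))
    (hgh : Tendsto (fun n => B.d (g n) (h n)) atTop (𝓝 0))
    (hgy : Tendsto (fun n => B.d (g n) y) atTop (𝓝 0)) :
    B.d x y = 0 := by
  refine le_antisymm (ge_of_tendsto (by simpa using (hxh.add hgh).add hgy) ?_) (B.nonneg _ hx _ hy)
  exact .of_forall fun n => B.tri _ hx _ (hg n) _ (hh n) _ hy

def polyGauge (B : BipolarMS α) (σ : ℕ) (q : ℕ → α → α → ℝ) (e f : α) : ℝ :=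
  ∑ υ ∈ range (σ + 1), q υ e f * B.d e f ^ υ

variable {F : α → α} {π : ℝ} {σ : ℕ} {q : ℕ → α → α → ℝ} {e f : α}

theorem mul_dist_pow_le_polyGauge (he : e ∈ B.E) (hf : f ∈ B.P) (hq : ∀ υ, 0 ≤ q υ e f)
    {ϱ : ℕ} (hϱσ : ϱ ≤ σ) : q ϱ e f * B.d e f ^ ϱ ≤ B.polyGauge σ q e f :=
  single_le_sum (f := fun υ => q υ e f * B.d e f ^ υ)
    (fun υ _ => mul_nonneg (hq υ) (pow_nonneg (B.nonneg e he f hf) υ))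
    (by simp only [mem_range]; omega)

theorem Covariant.mapsTo_iterate_E (hF : B.Covariant F) (n : ℕ) : Set.MapsTo F^[n] B.E B.E :=
  Set.MapsTo.iterate (fun e he => hF.1 e he) n

theorem Covariant.mapsTo_iterate_P (hF : B.Covariant F) (n : ℕ) : Set.MapsTo F^[n] B.P B.P :=
  Set.MapsTo.iterate (fun f hf => hF.2 f hf) n

theorem IsPolyContraction.polyGauge_iterate_le (hPC : B.IsPolyContraction F π σ q)
    (hF : B.Covariant F) (hπ : 0 ≤ π) (he : e ∈ B.E) (hf : f ∈ B.P) (n : ℕ) :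
    B.polyGauge σ q (F^[n] e) (F^[n] f) ≤ π ^ n * B.polyGauge σ q e f := by
  induction n with
  | zero => simp
  | succ n ih =>
    rw [Function.iterate_succ_apply', Function.iterate_succ_apply', pow_succ', mul_assoc]
    exact (hPC _ (hF.mapsTo_iterate_E n he) _ (hF.mapsTo_iterate_P n hf)).trans
      (mul_le_mul_of_nonneg_left ih hπ)

theorem IsPolyContraction.summable_dist_iterate (hPC : B.IsPolyContraction F π σ q)
    (hF : B.Covariant F) (hπ0 : 0 ≤ π) (hπ1 : π < 1)
    (hq : ∀ υ, ∀ e ∈ B.E, ∀ f ∈ B.P, 0 ≤ q υ e f) {ϱ : ℕ} (hϱ : ϱ ≠ 0) (hϱσ : ϱ ≤ σ)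
    {Q : ℝ} (hQ : 0 < Q) (hlb : ∀ e ∈ B.E, ∀ f ∈ B.P, Q ≤ q ϱ e f)
    (he : e ∈ B.E) (hf : f ∈ B.P) :
    Summable fun n => B.d (F^[n] e) (F^[n] f) := by
  refine summable_of_pow_le_mul_geometric (C := B.polyGauge σ q e f / Q) hϱ hπ0 hπ1
    (fun n => B.nonneg _ (hF.mapsTo_iterate_E n he) _ (hF.mapsTo_iterate_P n hf)) fun n => ?_
  have he' := hF.mapsTo_iterate_E n he
  have hf' := hF.mapsTo_iterate_P n hf
  rw [div_mul_eq_mul_div, le_div_iff₀ hQ]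
  calc B.d (F^[n] e) (F^[n] f) ^ ϱ * Q
      ≤ q ϱ (F^[n] e) (F^[n] f) * B.d (F^[n] e) (F^[n] f) ^ ϱ := by
        rw [mul_comm]
        exact mul_le_mul_of_nonneg_right (hlb _ he' _ hf') (pow_nonneg (B.nonneg _ he' _ hf') ϱ)
    _ ≤ B.polyGauge σ q (F^[n] e) (F^[n] f) :=
        mul_dist_pow_le_polyGauge he' hf' (fun υ => hq υ _ he' _ hf') hϱσ
    _ ≤ π ^ n * B.polyGauge σ q e f := hPC.polyGauge_iterate_le hF hπ0 he hf n
    _ = B.polyGauge σ q e f * π ^ n := mul_comm _ _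

end BipolarMS

theorem picardContinuous_polyContraction_fixedPoint_general {α : Type*} (B : BipolarMS α)
    (F : α → α) (hcov : B.Covariant F) (π : ℝ) (hπ : π ∈ Set.Ioo (0:ℝ) 1)
    (σ : ℕ) (q : ℕ → α → α → ℝ)
    (hq : ∀ υ, ∀ e ∈ B.E, ∀ f ∈ B.P, 0 ≤ q υ e f)
    (hPC : B.IsPolyContraction F π σ q)
    (hcomp : B.IsComplete) (hpc : B.PicardContinuous F)
    (ϱ : ℕ) (hϱ1 : 1 ≤ ϱ) (hϱσ : ϱ ≤ σ) (Q : ℝ) (hQ : 0 < Q)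
    (hlb : ∀ e ∈ B.E, ∀ f ∈ B.P, Q ≤ q ϱ e f) :
    ∃! x, x ∈ B.E ∩ B.P ∧ F x = x := by
  have hsum {e f : α} (he : e ∈ B.E) (hf : f ∈ B.P) :
      Summable fun n => B.d (F^[n] e) (F^[n] f) :=
    hPC.summable_dist_iterate hcov hπ.1.le hπ.2 hq (by omega) hϱσ hQ hlb he hf
  obtain ⟨e₀, he₀⟩ := B.hE
  obtain ⟨f₀, hf₀⟩ := B.hP
  have hgE n := hcov.mapsTo_iterate_E n he₀
  have hhP n := hcov.mapsTo_iterate_P n hf₀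
  have hsub : Summable fun n => B.d (F^[n + 1] e₀) (F^[n] f₀) := hsum (hcov.1 e₀ he₀) hf₀
  obtain ⟨x, hx, hgx, hxh⟩ := hcomp _ _ hgE hhP
    (B.tendsto_dist_of_summable hgE hhP (hsum he₀ hf₀) hsub)
  have hxF : B.d x (F x) = 0 := by
    refine B.dist_eq_zero_of_tendsto (fun n => hgE (n + 1)) hhP hx.1 (hcov.2 x hx.2) hxh
      hsub.tendsto_atTop_zero ?_
    simpa only [← Function.iterate_succ_apply' F] using hpc e₀ he₀ x hx.2 hgx
  have hFx : F x = x := ((B.eq_iff x hx (F x) ⟨hcov.1 x hx.1, hcov.2 x hx.2⟩).1 hxF).symm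
  refine ⟨x, ⟨hx, hFx⟩, fun y ⟨hy, hFy⟩ => ((B.eq_iff x hx y hy).1 ?_).symm⟩
  simpa [Function.iterate_fixed hFx, Function.iterate_fixed hFy, summable_const_iff]
    using hsum hx.1 hy.2

/-- Picard-continuous polynomial contraction fixed point theorem. -/
theorem picardContinuous_polyContraction_fixedPoint {α : Type*} (B : BipolarMS α)
    (F : α → α) (hcov : B.Covariant F) (π : ℝ) (hπ : π ∈ Set.Ioo (0:ℝ) 1)
    (σ : ℕ) (hσ : 1 ≤ σ) (q : ℕ → α → α → ℝ)
    (hq : ∀ υ, ∀ e ∈ B.E, ∀ f ∈ B.P, 0 ≤ q υ e f)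
    (hPC : B.IsPolyContraction F π σ q)
    (hcomp : B.IsComplete) (hpc : B.PicardContinuous F)
    (ϱ : ℕ) (hϱ1 : 1 ≤ ϱ) (hϱσ : ϱ ≤ σ) (Q : ℝ) (hQ : 0 < Q)
    (hlb : ∀ e ∈ B.E, ∀ f ∈ B.P, Q ≤ q ϱ e f) :
    ∃! x, x ∈ B.E ∩ B.P ∧ F x = x :=
  picardContinuous_polyContraction_fixedPoint_general B F hcov π hπ σ q hq hPC hcomp hpc ϱ hϱ1 hϱσ Q
    hQ hlb
end

section
/- Let (E, P, ϑ) be a bipolar metric space and F : E ∪ P → E ∪ P a covariant map. Suppose there exist π ∈ (0,1), σ ≥ 1, and two finite sequences of positive constants q₁,…,q_σ and H₁,…,H_σ such that Σ_{υ=1}^{σ} q_υ·ϑ(Fe, Ff)^υ ≤ π·Σ_{υ=1}^{σ} q_υ·[ϑ(e, f)^υ + H_υ·ϑ(f, Fe)^υ] for all e ∈ E, f ∈ P. Then F is Picard-continuous. -/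
open Filter Topology MeasureTheory

/-!
Put `e = F^κ g` and `f = h` in the contraction inequality. Since `d(F^κ g, h) → 0`, also
`d(F^(κ+1) g, h) → 0`, so the right-hand side, a polynomial without constant term in these two
distances, tends to `0`; the left-hand side dominates `q 1 * d(F^(κ+1) g, F h)`.
-/

namespace BipolarMS

variable {α : Type*} {B : BipolarMS α} {F : α → α}

theorem Covariant.iterate_mem_E (hF : B.Covariant F) {g : α} (hg : g ∈ B.E) (n : ℕ) :
    F^[n] g ∈ B.E := by
  induction n with
  | zero => exact hg
  | succ n ih => simpa only [Function.iterate_succ_apply'] using hF.1 _ ih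

end BipolarMS

open Finset

theorem mul_le_sum_mul_pow {s : Finset ℕ} (hs : 1 ∈ s) {q : ℕ → ℝ} (hq : ∀ υ ∈ s, 0 ≤ q υ)
    {x : ℝ} (hx : 0 ≤ x) : q 1 * x ≤ ∑ υ ∈ s, q υ * x ^ υ := by
  simpa only [pow_one] using
    single_le_sum (f := fun υ => q υ * x ^ υ) (fun υ hυ => mul_nonneg (hq υ hυ) (pow_nonneg hx υ)) hs

theorem tendsto_sum_Icc_mul_pow_add_mul_pow {ι : Type*} {l : Filter ι} {u v : ι → ℝ}
    (hu : Tendsto u l (𝓝 0)) (hv : Tendsto v l (𝓝 0)) (σ : ℕ) (q H : ℕ → ℝ) :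
    Tendsto (fun i => ∑ υ ∈ Icc 1 σ, q υ * (u i ^ υ + H υ * v i ^ υ)) l (𝓝 0) := by
  have hlim := tendsto_finsetSum (Icc 1 σ) fun υ _ =>
    ((hu.pow υ).add ((hv.pow υ).const_mul (H υ))).const_mul (q υ)
  convert hlim using 2
  refine (sum_eq_zero fun υ hυ => ?_).symm
  have hυ0 : υ ≠ 0 := Nat.one_le_iff_ne_zero.mp (mem_Icc.mp hυ).1
  simp only [zero_pow hυ0, mul_zero, add_zero]

theorem constCoeff_almostPolyContraction_picardContinuous_general {α : Type*}
    (B : BipolarMS α) (F : α → α) (hcov : B.Covariant F)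
    (π : ℝ) (σ : ℕ) (hσ : 1 ≤ σ)
    (q H : ℕ → ℝ) (hq : ∀ υ ∈ Finset.Icc 1 σ, 0 < q υ)
    (hAPC : ∀ e ∈ B.E, ∀ f ∈ B.P,
      ∑ υ ∈ Finset.Icc 1 σ, q υ * B.d (F e) (F f) ^ υ ≤
        π * ∑ υ ∈ Finset.Icc 1 σ, q υ * (B.d e f ^ υ + H υ * B.d (F e) f ^ υ)) :
    B.PicardContinuous F := by
  rintro g hg h hh hconv
  have hconv_succ : Tendsto (fun κ => B.d (F (F^[κ] g)) h) atTop (𝓝 0) := by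
    simpa only [Function.iterate_succ_apply'] using (tendsto_add_atTop_iff_nat 1).mpr hconv
  have hrhs := (tendsto_sum_Icc_mul_pow_add_mul_pow hconv hconv_succ σ q H).const_mul π
  have hone : 1 ∈ Icc 1 σ := mem_Icc.mpr ⟨le_rfl, hσ⟩
  have hmem := hcov.iterate_mem_E hg
  have hnonneg κ : 0 ≤ B.d (F (F^[κ] g)) (F h) := B.nonneg _ (hcov.1 _ (hmem κ)) _ (hcov.2 _ hh)
  refine squeeze_zero hnonneg (fun κ => ?_) (by simpa only [mul_zero] using hrhs.const_mul (q 1)⁻¹)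
  rw [le_inv_mul_iff₀ (hq 1 hone)]
  exact (mul_le_sum_mul_pow hone (fun υ hυ => (hq υ hυ).le) (hnonneg κ)).trans
    (hAPC _ (hmem κ) h hh)

/-- constant-coefficient almost polynomial contractions are
Picard-continuous. -/
theorem constCoeff_almostPolyContraction_picardContinuous {α : Type*}
    (B : BipolarMS α) (F : α → α) (hcov : B.Covariant F)
    (π : ℝ) (hπ : π ∈ Set.Ioo (0:ℝ) 1) (σ : ℕ) (hσ : 1 ≤ σ)
    (q H : ℕ → ℝ) (hq : ∀ υ ∈ Finset.Icc 1 σ, 0 < q υ)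
    (hH : ∀ υ ∈ Finset.Icc 1 σ, 0 < H υ)
    (hAPC : ∀ e ∈ B.E, ∀ f ∈ B.P,
      ∑ υ ∈ Finset.Icc 1 σ, q υ * B.d (F e) (F f) ^ υ ≤
        π * ∑ υ ∈ Finset.Icc 1 σ, q υ * (B.d e f ^ υ + H υ * B.d (F e) f ^ υ)) :
    B.PicardContinuous F :=
  constCoeff_almostPolyContraction_picardContinuous_general B F hcov π σ hσ q H hq hAPC
end
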